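/- Let R be a commutative ring and ψ: N → M a surjective homomorphism of R-modules. Then pullback along ψ (sending a polynomial law f: M → R to f ∘ ψ) is a graded isomorphism from the graded ring R[M] of polynomial laws M → R onto the graded R-subalgebra of R[N] whose degree-d part consists of those homogeneous degree-d polynomial laws f: N → R satisfying f ∘ t_u = f for all u in ker(ψ), where t_u: N → N is the translation polynomial law v ↦ v + u. -/

import Mathlib

/-!
Since `id_A ⊗ ψ : A ⊗ N → A ⊗ M` is surjective for every `R`-algebra `A`, pullback along `ψ` is
injective, and by right exactness its kernel is spanned by the `a ⊗ u` with `u ∈ ker ψ`. So a law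
`g` on `N` descends to `M` as soon as `g (x + a ⊗ u) = g x` for all such `a` and `u`. Invariance
under `t_u` is the case `a = 1`; homogeneity extends it to units `a`, because
`x + a ⊗ u = a • (a⁻¹ • x + 1 ⊗ u)`; and after adjoining a root of `X ^ 2 - a X + 1`, a faithful
extension, every `a` becomes a sum of two units.
-/

open scoped TensorProduct

universe u

/-- A polynomial law `M → N` over `R`: a family of maps `A ⊗[R] M → A ⊗[R] N`, one for every
commutative `R`-algebra `A`, commuting with base change along all `R`-algebra homomorphisms. -/
structure PolyLaw (R : Type u) [CommRing R] (M N : Type u)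
    [AddCommGroup M] [Module R M] [AddCommGroup N] [Module R N] : Type (u + 1) where
  toFun : ∀ (A : Type u) [CommRing A] [Algebra R A], A ⊗[R] M → A ⊗[R] N
  isCompat : ∀ {A B : Type u} [CommRing A] [Algebra R A] [CommRing B] [Algebra R B]
      (φ : A →ₐ[R] B) (x : A ⊗[R] M),
      LinearMap.rTensor N φ.toLinearMap (toFun A x) = toFun B (LinearMap.rTensor M φ.toLinearMap x)

namespace PolyLaw

variable {R : Type u} [CommRing R] {M N P : Type u}
  [AddCommGroup M] [Module R M] [AddCommGroup N] [Module R N] [AddCommGroup P] [Module R P]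

theorem ext' {f g : PolyLaw R M N}
    (h : ∀ (A : Type u) [CommRing A] [Algebra R A] (x : A ⊗[R] M), f.toFun A x = g.toFun A x) :
    f = g := by
  cases f; cases g
  simp only [mk.injEq]
  funext A instA instB x
  exact h A x

/-- A polynomial law is homogeneous of degree `d` if `φ_A (a • m) = a ^ d • φ_A m` always. -/
def IsHomogeneous (f : PolyLaw R M N) (d : ℕ) : Prop :=
  ∀ (A : Type u) [CommRing A] [Algebra R A] (a : A) (x : A ⊗[R] M),
    f.toFun A (a • x) = a ^ d • f.toFun A x

/-- The polynomial law induced by a linear map. -/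
noncomputable def ofLinear (ψ : M →ₗ[R] N) : PolyLaw R M N where
  toFun A _ _ := LinearMap.lTensor A ψ
  isCompat φ x := by
    show LinearMap.rTensor N φ.toLinearMap (LinearMap.lTensor _ ψ x)
      = LinearMap.lTensor _ ψ (LinearMap.rTensor M φ.toLinearMap x)
    rw [← LinearMap.comp_apply, ← LinearMap.comp_apply,
      LinearMap.rTensor_comp_lTensor, LinearMap.lTensor_comp_rTensor]

/-- Composition of polynomial laws. -/
def comp (g : PolyLaw R N P) (f : PolyLaw R M N) : PolyLaw R M P where
  toFun A _ _ x := g.toFun A (f.toFun A x)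
  isCompat φ x := by rw [g.isCompat φ, f.isCompat φ]

/-- Translation by an element `u : N`, as a polynomial law `N → N`. -/
noncomputable def translation (u : N) : PolyLaw R N N where
  toFun A _ _ x := x + (1 : A) ⊗ₜ[R] u
  isCompat φ x := by
    simp [map_add, LinearMap.rTensor_tmul, map_one]

end PolyLaw

namespace PolyLaw

variable {R : Type u} [CommRing R] {M N : Type u}
  [AddCommGroup M] [Module R M] [AddCommGroup N] [Module R N]

noncomputable instance : Zero (PolyLaw R M N) :=
  ⟨{ toFun := fun A _ _ _ => 0, isCompat := fun φ x => by simp }⟩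

noncomputable instance : Add (PolyLaw R M N) :=
  ⟨fun f g =>
    { toFun := fun A _ _ x => f.toFun A x + g.toFun A x
      isCompat := fun φ x => by simp [map_add, f.isCompat, g.isCompat] }⟩

noncomputable instance : Neg (PolyLaw R M N) :=
  ⟨fun f =>
    { toFun := fun A _ _ x => - f.toFun A x
      isCompat := fun φ x => by simp [map_neg, f.isCompat] }⟩

noncomputable instance : SMul R (PolyLaw R M N) :=
  ⟨fun r f =>
    { toFun := fun A _ _ x => r • f.toFun A x
      isCompat := fun φ x => by simp [map_smul, f.isCompat] }⟩

@[simp] lemma zero_toFun (A : Type u) [CommRing A] [Algebra R A] (x : A ⊗[R] M) :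
    (0 : PolyLaw R M N).toFun A x = 0 := rfl

@[simp] lemma add_toFun (f g : PolyLaw R M N) (A : Type u) [CommRing A] [Algebra R A]
    (x : A ⊗[R] M) : (f + g).toFun A x = f.toFun A x + g.toFun A x := rfl

@[simp] lemma neg_toFun (f : PolyLaw R M N) (A : Type u) [CommRing A] [Algebra R A]
    (x : A ⊗[R] M) : (-f).toFun A x = - f.toFun A x := rfl

@[simp] lemma smul_toFun (r : R) (f : PolyLaw R M N) (A : Type u) [CommRing A] [Algebra R A]
    (x : A ⊗[R] M) : (r • f).toFun A x = r • f.toFun A x := rfl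

noncomputable instance : AddCommGroup (PolyLaw R M N) where
  add_assoc a b c := ext' (by intros; simp [add_assoc])
  zero_add a := ext' (by intros; simp)
  add_zero a := ext' (by intros; simp)
  add_comm a b := ext' (by intros; simp [add_comm])
  neg_add_cancel a := ext' (by intros; simp)
  nsmul := nsmulRec
  zsmul := zsmulRec

noncomputable instance : Module R (PolyLaw R M N) where
  one_smul f := ext' (by intros; simp)
  mul_smul r s f := ext' (by intros; simp [mul_smul])
  smul_zero r := ext' (by intros; simp)
  smul_add r f g := ext' (by intros; simp)
  add_smul r s f := ext' (by intros; simp [add_smul])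
  zero_smul f := ext' (by intros; simp)

lemma rTensor_eq_algMap {A B : Type u} [CommRing A] [Algebra R A] [CommRing B] [Algebra R B]
    (φ : A →ₐ[R] B) (x : A ⊗[R] R) :
    LinearMap.rTensor R φ.toLinearMap x = Algebra.TensorProduct.map φ (AlgHom.id R R) x := by
  induction x using TensorProduct.induction_on with
  | zero => simp
  | tmul a r => simp
  | add x y hx hy => simp [map_add, hx, hy]

noncomputable instance : One (PolyLaw R M R) :=
  ⟨{ toFun := fun A _ _ _ => 1
     isCompat := fun φ x => by rw [rTensor_eq_algMap, map_one] }⟩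

noncomputable instance : Mul (PolyLaw R M R) :=
  ⟨fun f g =>
    { toFun := fun A _ _ x => f.toFun A x * g.toFun A x
      isCompat := fun φ x => by
        rw [rTensor_eq_algMap, map_mul, ← rTensor_eq_algMap, ← rTensor_eq_algMap,
          f.isCompat, g.isCompat] }⟩

@[simp] lemma one_toFun (A : Type u) [CommRing A] [Algebra R A] (x : A ⊗[R] M) :
    (1 : PolyLaw R M R).toFun A x = 1 := rfl

@[simp] lemma mul_toFun (f g : PolyLaw R M R) (A : Type u) [CommRing A] [Algebra R A]
    (x : A ⊗[R] M) : (f * g).toFun A x = f.toFun A x * g.toFun A x := rfl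

noncomputable instance : CommRing (PolyLaw R M R) :=
  { (inferInstance : AddCommGroup (PolyLaw R M R)) with
    mul := (· * ·)
    one := 1
    mul_assoc := fun a b c => ext' (by intros; simp [mul_assoc])
    one_mul := fun a => ext' (by intros; simp)
    mul_one := fun a => ext' (by intros; simp)
    left_distrib := fun a b c => ext' (by intros; simp [mul_add])
    right_distrib := fun a b c => ext' (by intros; simp [add_mul])
    mul_comm := fun a b => ext' (by intros; simp [mul_comm])
    zero_mul := fun a => ext' (by intros; simp)
    mul_zero := fun a => ext' (by intros; simp) }

noncomputable instance : Algebra R (PolyLaw R M R) :=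
  Algebra.ofModule (fun r x y => ext' (by intros; simp [smul_mul_assoc]))
    (fun r x y => ext' (by intros; simp [mul_smul_comm]))

end PolyLaw

open PolyLaw

open Polynomial in
theorem AdjoinRoot.of_injective_of_monic {A : Type u} [CommRing A] {f : A[X]}
    (hf : f.Monic) (hdeg : 0 < f.degree) : Function.Injective (AdjoinRoot.of f) := by
  have : Nontrivial A := by
    rcases subsingleton_or_nontrivial A with hA | hA
    · simp [Subsingleton.elim f 0] at hdeg
    · exact hA
  refine Function.Injective.of_comp (f := AdjoinRoot.modByMonicHom hf) fun r r' h => ?_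
  have hC : ∀ r : A, AdjoinRoot.modByMonicHom hf (AdjoinRoot.of f r) = C r := fun r => by
    rw [← AdjoinRoot.mk_C, AdjoinRoot.modByMonicHom_mk,
      (modByMonic_eq_self_iff hf).2 (degree_C_le.trans_lt hdeg)]
  simpa only [Function.comp_apply, hC, C_inj] using h

open Polynomial in
theorem exists_injective_algHom_apply_eq_add_units (R : Type u) [CommRing R] {A : Type u}
    [CommRing A] [Algebra R A] (a : A) :
    ∃ (B : Type u) (_ : CommRing B) (_ : Algebra R B) (ι : A →ₐ[R] B) (s t : B),
      Function.Injective ι ∧ IsUnit s ∧ IsUnit t ∧ ι a = s + t := by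
  rcases subsingleton_or_nontrivial A with hA | hA
  · exact ⟨A, _, _, AlgHom.id R A, 0, a, Function.injective_id, isUnit_of_subsingleton _,
      isUnit_of_subsingleton _, (zero_add a).symm⟩
  -- adjoin a root `s` of `X ^ 2 - a X + 1`, so that `s * (a - s) = 1`
  set f : A[X] := X ^ 2 - C a * X + 1
  have hdeg : f.degree = 2 := by unfold f; compute_degree!
  have hf : f.Monic := by unfold f; monicity!
  let ι : A →ₐ[R] AdjoinRoot f := (Algebra.ofId A (AdjoinRoot f)).restrictScalars R
  set s := AdjoinRoot.root f
  have hst : s * (ι a - s) = 1 := by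
    have h := AdjoinRoot.eval₂_root f
    simp only [f, eval₂_add, eval₂_sub, eval₂_mul, eval₂_X_pow, eval₂_X, eval₂_C, eval₂_one] at h
    change s * (AdjoinRoot.of f a - s) = 1
    linear_combination -h
  refine ⟨AdjoinRoot f, _, _, ι, s, ι a - s, ?_, .of_mul_eq_one _ hst,
    .of_mul_eq_one_right _ hst, (add_sub_cancel s _).symm⟩
  exact AdjoinRoot.of_injective_of_monic hf (by rw [hdeg]; norm_num)

namespace PolyLaw

variable {R : Type u} [CommRing R] {M N P : Type u}
  [AddCommGroup M] [Module R M] [AddCommGroup N] [Module R N] [AddCommGroup P] [Module R P]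

@[simp] lemma comp_toFun (g : PolyLaw R N P) (f : PolyLaw R M N) (A : Type u) [CommRing A]
    [Algebra R A] (x : A ⊗[R] M) : (g.comp f).toFun A x = g.toFun A (f.toFun A x) := rfl

@[simp] lemma ofLinear_toFun (ψ : M →ₗ[R] N) (A : Type u) [CommRing A] [Algebra R A]
    (x : A ⊗[R] M) : (ofLinear ψ).toFun A x = LinearMap.lTensor A ψ x := rfl

@[simp] lemma translation_toFun (u : N) (A : Type u) [CommRing A] [Algebra R A]
    (x : A ⊗[R] N) : (translation u).toFun A x = x + (1 : A) ⊗ₜ[R] u := rfl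

lemma _root_.LinearMap.lTensor_algebra_smul {A : Type u} [CommRing A] [Algebra R A]
    (ψ : N →ₗ[R] M) (a : A) (x : A ⊗[R] N) :
    LinearMap.lTensor A ψ (a • x) = a • LinearMap.lTensor A ψ x := by
  rw [← LinearMap.baseChange_eq_ltensor]
  exact LinearMap.map_smul _ a x

theorem comp_ofLinear_injective {ψ : N →ₗ[R] M} (hψ : Function.Surjective ψ) :
    Function.Injective (fun f : PolyLaw R M P => f.comp (ofLinear ψ)) := by
  intro f g h
  refine ext' fun A _ _ x => ?_
  obtain ⟨y, rfl⟩ := LinearMap.lTensor_surjective A hψ x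
  exact congrArg (fun F : PolyLaw R N P => F.toFun A y) h

theorem IsHomogeneous.comp_ofLinear {f : PolyLaw R M P} {d : ℕ} (hf : f.IsHomogeneous d)
    (ψ : N →ₗ[R] M) : (f.comp (ofLinear ψ)).IsHomogeneous d := fun A _ _ a x => by
  simp only [comp_toFun, ofLinear_toFun, LinearMap.lTensor_algebra_smul]
  exact hf A a _

theorem comp_ofLinear_comp_translation (f : PolyLaw R M P) {ψ : N →ₗ[R] M} {u : N}
    (hu : u ∈ LinearMap.ker ψ) :
    (f.comp (ofLinear ψ)).comp (translation u) = f.comp (ofLinear ψ) :=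
  ext' fun _ _ _ _ => by simp [LinearMap.mem_ker.mp hu]

theorem IsHomogeneous.toFun_add_tmul_of_isUnit {g : PolyLaw R N P} {d : ℕ}
    (hg : g.IsHomogeneous d) {u : N} (hu : g.comp (translation u) = g)
    {A : Type u} [CommRing A] [Algebra R A] {s : A} (hs : IsUnit s) (y : A ⊗[R] N) :
    g.toFun A (y + s ⊗ₜ[R] u) = g.toFun A y := by
  obtain ⟨s, rfl⟩ := hs
  have htrans := congrArg (fun F : PolyLaw R N P => F.toFun A ((↑s⁻¹ : A) • y)) hu
  simp only [comp_toFun, translation_toFun] at htrans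
  calc g.toFun A (y + (s : A) ⊗ₜ[R] u)
      = g.toFun A ((s : A) • ((↑s⁻¹ : A) • y + (1 : A) ⊗ₜ[R] u)) := by
        rw [smul_add, smul_smul, Units.mul_inv, one_smul, TensorProduct.smul_tmul', smul_eq_mul,
          mul_one]
    _ = (s : A) ^ d • g.toFun A ((↑s⁻¹ : A) • y) := by rw [hg, htrans]
    _ = g.toFun A y := by rw [← hg, smul_smul, Units.mul_inv, one_smul]

theorem IsHomogeneous.toFun_add_tmul [Module.Flat R P] {g : PolyLaw R N P} {d : ℕ}
    (hg : g.IsHomogeneous d) {u : N} (hu : g.comp (translation u) = g)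
    (A : Type u) [CommRing A] [Algebra R A] (a : A) (x : A ⊗[R] N) :
    g.toFun A (x + a ⊗ₜ[R] u) = g.toFun A x := by
  obtain ⟨B, _, _, ι, s, t, hι, hs, ht, hst⟩ := exists_injective_algHom_apply_eq_add_units R a
  apply Module.Flat.rTensor_preserves_injective_linearMap (M := P) ι.toLinearMap hι
  rw [g.isCompat, g.isCompat, map_add, LinearMap.rTensor_tmul, AlgHom.toLinearMap_apply, hst,
    TensorProduct.add_tmul, ← add_assoc, hg.toFun_add_tmul_of_isUnit hu ht,
    hg.toFun_add_tmul_of_isUnit hu hs]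

section Descend

variable {ψ : N →ₗ[R] M} (hψ : Function.Surjective ψ) {g : PolyLaw R N P}
  (hg : ∀ u ∈ LinearMap.ker ψ, ∀ (A : Type u) [CommRing A] [Algebra R A] (a : A)
    (x : A ⊗[R] N), g.toFun A (x + a ⊗ₜ[R] u) = g.toFun A x)
include hψ hg

theorem toFun_eq_of_lTensor_eq {A : Type u} [CommRing A] [Algebra R A] {y y' : A ⊗[R] N}
    (h : LinearMap.lTensor A ψ y = LinearMap.lTensor A ψ y') : g.toFun A y = g.toFun A y' := by
  have hinv : ∀ t z,
      g.toFun A (z + LinearMap.lTensor A (LinearMap.ker ψ).subtype t) = g.toFun A z := by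
    intro t
    induction t using TensorProduct.induction_on with
    | zero => simp
    | tmul a v => exact fun z => hg v v.2 A a z
    | add t₁ t₂ h₁ h₂ => intro z; rw [map_add, ← add_assoc, h₂, h₁]
  have hker : y' - y ∈ LinearMap.ker (LinearMap.lTensor A ψ) := by
    rw [LinearMap.mem_ker, map_sub, h, sub_self]
  obtain ⟨t, ht⟩ := (lTensor_exact A (LinearMap.exact_subtype_ker_map ψ) hψ (y' - y)).mp hker
  rw [← hinv t y, ht, add_sub_cancel]

noncomputable def descend : PolyLaw R M P where
  toFun A _ _ x := g.toFun A (Function.surjInv (LinearMap.lTensor_surjective A hψ) x)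
  isCompat {A B} _ _ _ _ φ x := by
    rw [g.isCompat φ]
    apply toFun_eq_of_lTensor_eq hψ hg
    rw [← LinearMap.comp_apply, LinearMap.lTensor_comp_rTensor, ← LinearMap.rTensor_comp_lTensor,
      LinearMap.comp_apply, Function.surjInv_eq (LinearMap.lTensor_surjective A hψ),
      Function.surjInv_eq (LinearMap.lTensor_surjective B hψ)]

theorem descend_comp_ofLinear : (descend hψ hg).comp (ofLinear ψ) = g :=
  ext' fun _ _ _ _ => toFun_eq_of_lTensor_eq hψ hg (Function.surjInv_eq _ _)

theorem IsHomogeneous.descend {d : ℕ} (hd : g.IsHomogeneous d) :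
    (descend hψ hg).IsHomogeneous d := fun A _ _ a x => by
  have hsurj := LinearMap.lTensor_surjective A hψ
  refine (toFun_eq_of_lTensor_eq hψ hg ?_).trans (hd A a (Function.surjInv hsurj x))
  rw [LinearMap.lTensor_algebra_smul, Function.surjInv_eq hsurj, Function.surjInv_eq hsurj]

end Descend

end PolyLaw

theorem graded_subring_lemma (R : Type u) [CommRing R] (M N : Type u)
    [AddCommGroup M] [Module R M] [AddCommGroup N] [Module R N]
    (ψ : N →ₗ[R] M) (hψ : Function.Surjective ψ) :
    Function.Injective (fun f : PolyLaw R M R => f.comp (ofLinear ψ)) ∧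
    (∀ f g : PolyLaw R M R, (f + g).comp (ofLinear ψ)
        = f.comp (ofLinear ψ) + g.comp (ofLinear ψ)) ∧
    (∀ f g : PolyLaw R M R, (f * g).comp (ofLinear ψ)
        = (f.comp (ofLinear ψ)) * (g.comp (ofLinear ψ))) ∧
    (∀ d : ℕ, (fun f : PolyLaw R M R => f.comp (ofLinear ψ)) ''
        {f : PolyLaw R M R | f.IsHomogeneous d} =
      {f : PolyLaw R N R | f.IsHomogeneous d ∧
        ∀ u ∈ LinearMap.ker ψ, f.comp (translation u) = f}) := by
  refine ⟨comp_ofLinear_injective hψ, fun _ _ => rfl, fun _ _ => rfl, fun d => ?_⟩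
  ext g
  constructor
  · rintro ⟨f, hf, rfl⟩
    exact ⟨hf.comp_ofLinear ψ, fun u hu => comp_ofLinear_comp_translation f hu⟩
  · rintro ⟨hgd, hginv⟩
    have hg := fun u (hu : u ∈ LinearMap.ker ψ) => hgd.toFun_add_tmul (hginv u hu)
    exact ⟨descend hψ hg, hgd.descend hψ hg, descend_comp_ofLinear hψ hg⟩
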